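/- arXiv:2403.02940 — 5 statements merged into one kernel-verified Lean document; each statement's English description precedes it below -/
import Mathlib

section
/- Let Y ∈ ℝ^{l×m} and Ŷ ∈ ℝ^{(r-1)l×m}, and set R = I_m + Ŷ^T ((I_l + Y Y^T)^{-1} ⊗ I_{r-1}) Ŷ and W = I_{(r-1)l} + (Y Y^T) ⊗ I_{r-1} + Ŷ Ŷ^T. Then R^{-1} Ŷ^T ((I_l + Y Y^T)^{-1} ⊗ I_{r-1}) = Ŷ^T W^{-1}. -/
open Matrix Kronecker

/-- for Y ∈ ℝ^{l×m}, Ŷ ∈ ℝ^{(r-1)l×m},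
R = I + Ŷᵀ ((I + Y Yᵀ)⁻¹ ⊗ I_{r-1}) Ŷ and
W = I + (Y Yᵀ) ⊗ I_{r-1} + Ŷ Ŷᵀ one has
R⁻¹ Ŷᵀ ((I + Y Yᵀ)⁻¹ ⊗ I_{r-1}) = Ŷᵀ W⁻¹. -/
theorem stmt5 (l m r : ℕ)
    (Y : Matrix (Fin l) (Fin m) ℝ) (Yh : Matrix (Fin l × Fin (r - 1)) (Fin m) ℝ) :
    ((1 : Matrix (Fin m) (Fin m) ℝ) +
        Yhᵀ * (((1 + Y * Yᵀ)⁻¹) ⊗ₖ (1 : Matrix (Fin (r - 1)) (Fin (r - 1)) ℝ)) * Yh)⁻¹ *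
      Yhᵀ * (((1 + Y * Yᵀ)⁻¹) ⊗ₖ (1 : Matrix (Fin (r - 1)) (Fin (r - 1)) ℝ))
    = Yhᵀ *
      ((1 + (Y * Yᵀ) ⊗ₖ (1 : Matrix (Fin (r - 1)) (Fin (r - 1)) ℝ) + Yh * Yhᵀ)⁻¹) := by
  set A : Matrix (Fin l) (Fin l) ℝ := 1 + Y * Yᵀ with hA_def
  -- A is positive definite
  have hYYT : (Y * Yᵀ).PosSemidef := by
    have := Matrix.posSemidef_self_mul_conjTranspose Y
    rwa [Matrix.conjTranspose_eq_transpose_of_trivial] at this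
  have hA : A.PosDef := Matrix.PosDef.add_posSemidef Matrix.PosDef.one hYYT
  -- A ⊗ 1 = 1 + (Y ⊗ 1) (Y ⊗ 1)ᵀ
  have hkron : A ⊗ₖ (1 : Matrix (Fin (r - 1)) (Fin (r - 1)) ℝ)
      = 1 + (Y ⊗ₖ (1 : Matrix (Fin (r - 1)) (Fin (r - 1)) ℝ)) *
          (Y ⊗ₖ (1 : Matrix (Fin (r - 1)) (Fin (r - 1)) ℝ))ᵀ := by
    rw [hA_def, Matrix.add_kronecker, Matrix.one_kronecker_one]
    congr 1
    rw [← Matrix.kroneckerMap_transpose, Matrix.transpose_one,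
      ← Matrix.mul_kronecker_mul, Matrix.one_mul]
  have hAk : (A ⊗ₖ (1 : Matrix (Fin (r - 1)) (Fin (r - 1)) ℝ)).PosDef := by
    rw [hkron]
    refine Matrix.PosDef.add_posSemidef Matrix.PosDef.one ?_
    have := Matrix.posSemidef_self_mul_conjTranspose
      (Y ⊗ₖ (1 : Matrix (Fin (r - 1)) (Fin (r - 1)) ℝ))
    rwa [Matrix.conjTranspose_eq_transpose_of_trivial] at this
  -- B = A⁻¹ ⊗ 1 = (A ⊗ 1)⁻¹
  have hB : A⁻¹ ⊗ₖ (1 : Matrix (Fin (r - 1)) (Fin (r - 1)) ℝ)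
      = (A ⊗ₖ (1 : Matrix (Fin (r - 1)) (Fin (r - 1)) ℝ))⁻¹ := by
    rw [Matrix.inv_kronecker, inv_one]
  have hYhYh : (Yh * Yhᵀ).PosSemidef := by
    have := Matrix.posSemidef_self_mul_conjTranspose Yh
    rwa [Matrix.conjTranspose_eq_transpose_of_trivial] at this
  -- W
  set W : Matrix (Fin l × Fin (r - 1)) (Fin l × Fin (r - 1)) ℝ :=
    1 + (Y * Yᵀ) ⊗ₖ (1 : Matrix (Fin (r - 1)) (Fin (r - 1)) ℝ) + Yh * Yhᵀ with hW_def
  have hWA : W = A ⊗ₖ (1 : Matrix (Fin (r - 1)) (Fin (r - 1)) ℝ) + Yh * Yhᵀ := by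
    rw [hW_def, hA_def, Matrix.add_kronecker, Matrix.one_kronecker_one]
  have hW : W.PosDef := by
    rw [hWA]; exact hAk.add_posSemidef hYhYh
  -- R
  set R : Matrix (Fin m) (Fin m) ℝ :=
    1 + Yhᵀ * (A⁻¹ ⊗ₖ (1 : Matrix (Fin (r - 1)) (Fin (r - 1)) ℝ)) * Yh with hR_def
  have hR : R.PosDef := by
    rw [hR_def]
    refine Matrix.PosDef.add_posSemidef Matrix.PosDef.one ?_
    have hBsd : (A⁻¹ ⊗ₖ (1 : Matrix (Fin (r - 1)) (Fin (r - 1)) ℝ)).PosSemidef := by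
      rw [hB]; exact hAk.inv.posSemidef
    have := hBsd.conjTranspose_mul_mul_same Yh
    rwa [Matrix.conjTranspose_eq_transpose_of_trivial] at this
  -- key cancellation
  have hAinv : (A⁻¹ ⊗ₖ (1 : Matrix (Fin (r - 1)) (Fin (r - 1)) ℝ)) *
      (A ⊗ₖ (1 : Matrix (Fin (r - 1)) (Fin (r - 1)) ℝ)) = 1 := by
    rw [hB]
    exact Matrix.nonsing_inv_mul _ ((Matrix.isUnit_iff_isUnit_det _).mp hAk.isUnit)
  have key : Yhᵀ * (A⁻¹ ⊗ₖ (1 : Matrix (Fin (r - 1)) (Fin (r - 1)) ℝ)) * W = R * Yhᵀ := by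
    rw [hWA, hR_def]
    have e : Yhᵀ * (A⁻¹ ⊗ₖ (1 : Matrix (Fin (r - 1)) (Fin (r - 1)) ℝ)) *
        (A ⊗ₖ (1 : Matrix (Fin (r - 1)) (Fin (r - 1)) ℝ) + Yh * Yhᵀ)
        = Yhᵀ * ((A⁻¹ ⊗ₖ (1 : Matrix (Fin (r - 1)) (Fin (r - 1)) ℝ)) *
            (A ⊗ₖ (1 : Matrix (Fin (r - 1)) (Fin (r - 1)) ℝ)))
          + Yhᵀ * (A⁻¹ ⊗ₖ (1 : Matrix (Fin (r - 1)) (Fin (r - 1)) ℝ)) * Yh * Yhᵀ := by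
      simp only [Matrix.mul_add, Matrix.mul_assoc]
    rw [e, hAinv, Matrix.mul_one, Matrix.add_mul, Matrix.one_mul]
  have hWunit : IsUnit W.det := (Matrix.isUnit_iff_isUnit_det _).mp hW.isUnit
  have hRunit : IsUnit R.det := (Matrix.isUnit_iff_isUnit_det _).mp hR.isUnit
  calc R⁻¹ * Yhᵀ * (A⁻¹ ⊗ₖ (1 : Matrix (Fin (r - 1)) (Fin (r - 1)) ℝ))
      = R⁻¹ * (Yhᵀ * (A⁻¹ ⊗ₖ (1 : Matrix (Fin (r - 1)) (Fin (r - 1)) ℝ)) * W) * W⁻¹ := by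
        have e2 : R⁻¹ * (Yhᵀ * (A⁻¹ ⊗ₖ (1 : Matrix (Fin (r - 1)) (Fin (r - 1)) ℝ)) * W) * W⁻¹
            = R⁻¹ * Yhᵀ * (A⁻¹ ⊗ₖ (1 : Matrix (Fin (r - 1)) (Fin (r - 1)) ℝ)) * (W * W⁻¹) := by
          simp only [Matrix.mul_assoc]
        rw [e2, Matrix.mul_nonsing_inv _ hWunit, Matrix.mul_one]
    _ = R⁻¹ * (R * Yhᵀ) * W⁻¹ := by rw [key]
    _ = Yhᵀ * W⁻¹ := by
        rw [← Matrix.mul_assoc R⁻¹ R Yhᵀ, Matrix.nonsing_inv_mul _ hRunit, Matrix.one_mul]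
end

section
/- Let A ∈ ℝ^{n×n}, B ∈ ℝ^{n×m}, Â ∈ ℝ^{(r-1)n×n}, B̂ ∈ ℝ^{(r-1)n×m}, C ∈ ℝ^{l×n}, and let X, Δ ∈ ℝ^{n×n} be symmetric with R_X := I + B̂^T ⋉ X ⋉ B̂ invertible and I + B̂^T ⋉ (X+Δ) ⋉ B̂ invertible, where Y ⋉ X ⋉ Z := Y^T (X ⊗ I_{r-1}) Z denotes the semi-tensor sandwich. Define B_X = B P_X^{-1} and B̂_X = B̂ P_X^{-1} with P_X^T P_X = R_X, L_X^T = B_X^T X + B̂_X^T ⋉ X ⋉ Â, A_X = A − B_X L_X^T, Â_X = Â − B̂_X L_X^T, and the residual operator C(X) = C^T C + A^T X + X A + Â^T ⋉ X ⋉ Â − (X B + Â^T ⋉ X ⋉ B̂)(I + B̂^T ⋉ X ⋉ B̂)^{-1}(X B + Â^T ⋉ X ⋉ B̂)^T. Then C(X+Δ) − C(X) = A_X^T Δ + Δ A_X + Â_X^T ⋉ Δ ⋉ Â_X − (Δ B_X + Â_X^T ⋉ Δ ⋉ B̂_X)(I + B̂_X^T ⋉ Δ ⋉ B̂_X)^{-1}(Δ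 B_X + Â_X^T ⋉ Δ ⋉ B̂_X)^T. -/
open Matrix Kronecker

/-- The SCARE residual operator, with the left semi-tensor sandwiches
Mᵀ ⋉ X ⋉ N written as Mᵀ (X ⊗ I_{r-1}) N. -/
noncomputable def scareResid {n m l r : ℕ} (A : Matrix (Fin n) (Fin n) ℝ)
    (B : Matrix (Fin n) (Fin m) ℝ) (C : Matrix (Fin l) (Fin n) ℝ)
    (Ah : Matrix (Fin n × Fin (r - 1)) (Fin n) ℝ)
    (Bh : Matrix (Fin n × Fin (r - 1)) (Fin m) ℝ)
    (X : Matrix (Fin n) (Fin n) ℝ) : Matrix (Fin n) (Fin n) ℝ :=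
  Cᵀ * C + Aᵀ * X + X * A
    + Ahᵀ * (X ⊗ₖ (1 : Matrix (Fin (r - 1)) (Fin (r - 1)) ℝ)) * Ah
    - (X * B + Ahᵀ * (X ⊗ₖ (1 : Matrix (Fin (r - 1)) (Fin (r - 1)) ℝ)) * Bh) *
      ((1 : Matrix (Fin m) (Fin m) ℝ) +
        Bhᵀ * (X ⊗ₖ (1 : Matrix (Fin (r - 1)) (Fin (r - 1)) ℝ)) * Bh)⁻¹ *
      (X * B + Ahᵀ * (X ⊗ₖ (1 : Matrix (Fin (r - 1)) (Fin (r - 1)) ℝ)) * Bh)ᵀ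

set_option maxHeartbeats 2000000 in
/-- incorporation identity — the difference of SCARE residuals at
X + Δ and X is again a SCARE expression in Δ built from the closed-loop data
A_X, Â_X, B_X, B̂_X, where P_Xᵀ P_X = R_X = I + B̂ᵀ ⋉ X ⋉ B̂. -/
theorem stmt8 (n m l r : ℕ)
    (A : Matrix (Fin n) (Fin n) ℝ) (B : Matrix (Fin n) (Fin m) ℝ)
    (C : Matrix (Fin l) (Fin n) ℝ)
    (Ah : Matrix (Fin n × Fin (r - 1)) (Fin n) ℝ)
    (Bh : Matrix (Fin n × Fin (r - 1)) (Fin m) ℝ)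
    (X Δ : Matrix (Fin n) (Fin n) ℝ) (P : Matrix (Fin m) (Fin m) ℝ)
    (hX : Xᵀ = X) (hΔ : Δᵀ = Δ)
    (hP : Pᵀ * P = (1 : Matrix (Fin m) (Fin m) ℝ) +
      Bhᵀ * (X ⊗ₖ (1 : Matrix (Fin (r - 1)) (Fin (r - 1)) ℝ)) * Bh)
    (hPu : IsUnit P)
    (hRX : IsUnit ((1 : Matrix (Fin m) (Fin m) ℝ) +
      Bhᵀ * (X ⊗ₖ (1 : Matrix (Fin (r - 1)) (Fin (r - 1)) ℝ)) * Bh))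
    (hRXΔ : IsUnit ((1 : Matrix (Fin m) (Fin m) ℝ) +
      Bhᵀ * ((X + Δ) ⊗ₖ (1 : Matrix (Fin (r - 1)) (Fin (r - 1)) ℝ)) * Bh)) :
    let BX := B * P⁻¹
    let BhX := Bh * P⁻¹
    let LT := BXᵀ * X + BhXᵀ * (X ⊗ₖ (1 : Matrix (Fin (r - 1)) (Fin (r - 1)) ℝ)) * Ah
    let AX := A - BX * LT
    let AhX := Ah - BhX * LT
    scareResid A B C Ah Bh (X + Δ) - scareResid A B C Ah Bh X
      = AXᵀ * Δ + Δ * AX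
        + AhXᵀ * (Δ ⊗ₖ (1 : Matrix (Fin (r - 1)) (Fin (r - 1)) ℝ)) * AhX
        - (Δ * BX + AhXᵀ * (Δ ⊗ₖ (1 : Matrix (Fin (r - 1)) (Fin (r - 1)) ℝ)) * BhX) *
          ((1 : Matrix (Fin m) (Fin m) ℝ) +
            BhXᵀ * (Δ ⊗ₖ (1 : Matrix (Fin (r - 1)) (Fin (r - 1)) ℝ)) * BhX)⁻¹ *
          (Δ * BX + AhXᵀ * (Δ ⊗ₖ (1 : Matrix (Fin (r - 1)) (Fin (r - 1)) ℝ)) * BhX)ᵀ := by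
  intro BX BhX LT AX AhX
  have hBX : BX = B * P⁻¹ := rfl
  have hBhX : BhX = Bh * P⁻¹ := rfl
  simp only [scareResid]
  simp only [Matrix.add_kronecker] at hRXΔ ⊢
  set Kx := X ⊗ₖ (1 : Matrix (Fin (r - 1)) (Fin (r - 1)) ℝ) with hKx
  set Kd := Δ ⊗ₖ (1 : Matrix (Fin (r - 1)) (Fin (r - 1)) ℝ) with hKd
  set R := (1 : Matrix (Fin m) (Fin m) ℝ) + Bhᵀ * Kx * Bh with hR
  set Q := (1 : Matrix (Fin m) (Fin m) ℝ) + Bhᵀ * (Kx + Kd) * Bh with hQ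
  set S := X * B + Ahᵀ * Kx * Bh with hSdef
  set D := Δ * B + Ahᵀ * Kd * Bh with hDdef
  -- symmetry facts
  have hKxT : Kxᵀ = Kx := by
    rw [hKx, ← Matrix.kroneckerMap_transpose, hX, Matrix.transpose_one]
  have hKdT : Kdᵀ = Kd := by
    rw [hKd, ← Matrix.kroneckerMap_transpose, hΔ, Matrix.transpose_one]
  have hRT : Rᵀ = R := by
    rw [hR]
    simp [Matrix.transpose_add, Matrix.transpose_mul, hKxT, Matrix.mul_assoc]
  have hQT : Qᵀ = Q := by
    rw [hQ]
    simp [Matrix.transpose_add, Matrix.transpose_mul, hKxT, hKdT, Matrix.mul_assoc]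
  -- invertibility facts
  have hRdet : IsUnit R.det := (Matrix.isUnit_iff_isUnit_det R).mp hRX
  have hQdet : IsUnit Q.det := (Matrix.isUnit_iff_isUnit_det Q).mp hRXΔ
  have hPdet : IsUnit P.det := (Matrix.isUnit_iff_isUnit_det P).mp hPu
  have hRRi : R * R⁻¹ = 1 := Matrix.mul_nonsing_inv R hRdet
  have hRiR : R⁻¹ * R = 1 := Matrix.nonsing_inv_mul R hRdet
  have hQQi : Q * Q⁻¹ = 1 := Matrix.mul_nonsing_inv Q hQdet
  have hQiQ : Q⁻¹ * Q = 1 := Matrix.nonsing_inv_mul Q hQdet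
  have hPPi : P * P⁻¹ = 1 := Matrix.mul_nonsing_inv P hPdet
  have hPiP : P⁻¹ * P = 1 := Matrix.nonsing_inv_mul P hPdet
  have hPiPT : (P⁻¹)ᵀ * Pᵀ = 1 := by
    rw [← Matrix.transpose_mul, hPPi, Matrix.transpose_one]
  have hPTPi : Pᵀ * (P⁻¹)ᵀ = 1 := by
    rw [← Matrix.transpose_mul, hPiP, Matrix.transpose_one]
  have hRiT : (R⁻¹)ᵀ = R⁻¹ := by rw [Matrix.transpose_nonsing_inv, hRT]
  have hQiT : (Q⁻¹)ᵀ = Q⁻¹ := by rw [Matrix.transpose_nonsing_inv, hQT]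
  -- cancellation lemmas
  have cP : ∀ (p : ℕ) (x : Matrix (Fin m) (Fin p) ℝ), P⁻¹ * (P * x) = x := by
    intro p x; rw [← Matrix.mul_assoc, hPiP, Matrix.one_mul]
  have cPi : ∀ (p : ℕ) (x : Matrix (Fin m) (Fin p) ℝ), P * (P⁻¹ * x) = x := by
    intro p x; rw [← Matrix.mul_assoc, hPPi, Matrix.one_mul]
  have cPT : ∀ (p : ℕ) (x : Matrix (Fin m) (Fin p) ℝ), Pᵀ * ((P⁻¹)ᵀ * x) = x := by
    intro p x; rw [← Matrix.mul_assoc, hPTPi, Matrix.one_mul]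
  have cPiT : ∀ (p : ℕ) (x : Matrix (Fin m) (Fin p) ℝ), (P⁻¹)ᵀ * (Pᵀ * x) = x := by
    intro p x; rw [← Matrix.mul_assoc, hPiPT, Matrix.one_mul]
  have cR : ∀ (p : ℕ) (x : Matrix (Fin m) (Fin p) ℝ), R⁻¹ * (R * x) = x := by
    intro p x; rw [← Matrix.mul_assoc, hRiR, Matrix.one_mul]
  have cRR : ∀ (p : ℕ) (x : Matrix (Fin m) (Fin p) ℝ), R * (R⁻¹ * x) = x := by
    intro p x; rw [← Matrix.mul_assoc, hRRi, Matrix.one_mul]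
  have cQ : ∀ (p : ℕ) (x : Matrix (Fin m) (Fin p) ℝ), Q⁻¹ * (Q * x) = x := by
    intro p x; rw [← Matrix.mul_assoc, hQiQ, Matrix.one_mul]
  have cQQ : ∀ (p : ℕ) (x : Matrix (Fin m) (Fin p) ℝ), Q * (Q⁻¹ * x) = x := by
    intro p x; rw [← Matrix.mul_assoc, hQQi, Matrix.one_mul]
  -- E-expansion : Bhᵀ Kd Bh = Q - R
  have hEmat : Bhᵀ * Kd * Bh = Q - R := by
    rw [hQ, hR, Matrix.mul_add, Matrix.add_mul]
    abel
  have cE : ∀ (p : ℕ) (x : Matrix (Fin m) (Fin p) ℝ),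
      Bhᵀ * (Kd * (Bh * x)) = Q * x - R * x := by
    intro p x
    rw [← Matrix.sub_mul, ← hEmat, Matrix.mul_assoc, Matrix.mul_assoc]
  -- R⁻¹ via P
  have hRinv : R⁻¹ = P⁻¹ * (P⁻¹)ᵀ := by
    rw [← hP, Matrix.mul_inv_rev, Matrix.transpose_nonsing_inv]
  -- the feedback matrix
  have hLT : LT = (P⁻¹)ᵀ * Sᵀ := by
    show (B * P⁻¹)ᵀ * X + (Bh * P⁻¹)ᵀ * Kx * Ah = _
    rw [hSdef]
    simp only [Matrix.transpose_mul, Matrix.transpose_add, hX, hKxT,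
      Matrix.transpose_transpose, Matrix.mul_add, Matrix.mul_assoc]
  have hAX : AX = A - B * (R⁻¹ * Sᵀ) := by
    show A - BX * LT = _
    rw [hLT, hBX, hRinv]
    simp only [Matrix.mul_assoc]
  have hAhX : AhX = Ah - Bh * (R⁻¹ * Sᵀ) := by
    show Ah - BhX * LT = _
    rw [hLT, hBhX, hRinv]
    simp only [Matrix.mul_assoc]
  -- the inner inverse
  have hQ2 : Q = Pᵀ * P + Bhᵀ * Kd * Bh := by
    rw [hQ, hP, hR, Matrix.mul_add, Matrix.add_mul]
    abel
  have hM : (1 : Matrix (Fin m) (Fin m) ℝ) + BhXᵀ * Kd * BhX = (P⁻¹)ᵀ * Q * P⁻¹ := by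
    rw [hBhX, hQ2, Matrix.mul_add, Matrix.add_mul]
    congr 1
    · rw [← Matrix.mul_assoc, hPiPT, Matrix.one_mul, hPPi]
    · simp only [Matrix.transpose_mul, Matrix.mul_assoc]
  have hMi : ((1 : Matrix (Fin m) (Fin m) ℝ) + BhXᵀ * Kd * BhX)⁻¹ = P * (Q⁻¹ * Pᵀ) := by
    apply Matrix.inv_eq_right_inv
    rw [hM]
    simp only [Matrix.mul_assoc, cP, cQQ]
    exact hPiPT
  -- eliminate P from the residual-gain term
  have hSD : (X + Δ) * B + Ahᵀ * (Kx + Kd) * Bh = S + D := by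
    rw [hSdef, hDdef, Matrix.add_mul, Matrix.mul_add, Matrix.add_mul]
    abel
  have hG : Δ * (B * P⁻¹) + (Ah - Bh * (R⁻¹ * Sᵀ))ᵀ * Kd * (Bh * P⁻¹)
      = (S + D - S * (R⁻¹ * Q)) * P⁻¹ := by
    simp only [hDdef, Matrix.transpose_sub, Matrix.transpose_mul,
      Matrix.transpose_transpose, hRiT, Matrix.sub_mul, Matrix.add_mul,
      Matrix.mul_sub, Matrix.mul_add, Matrix.mul_assoc, cE, cR]
    abel
  have hQuad : ((S + D - S * (R⁻¹ * Q)) * P⁻¹) * (P * (Q⁻¹ * Pᵀ)) *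
      ((S + D - S * (R⁻¹ * Q)) * P⁻¹)ᵀ
      = (S + D - S * (R⁻¹ * Q)) * (Q⁻¹ * (S + D - S * (R⁻¹ * Q))ᵀ) := by
    simp only [Matrix.transpose_mul, Matrix.mul_assoc, cP, cPT]
  rw [hAX, hAhX, hMi, hBX, hBhX, hSD, hG, hQuad]
  simp only [hDdef, Matrix.transpose_add, Matrix.transpose_sub, Matrix.transpose_mul,
    Matrix.transpose_transpose, hX, hΔ, hKxT, hKdT, hRiT, hQT,
    Matrix.mul_add, Matrix.add_mul, Matrix.mul_sub, Matrix.sub_mul,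
    Matrix.mul_assoc, Matrix.mul_one, Matrix.one_mul,
    cR, cRR, cQ, cQQ, cE]
  abel
end

section
/- Let A ∈ ℝ^{n×n}, B ∈ ℝ^{n×m}, C ∈ ℝ^{l×n}, γ > 0 with A_γ := A − γ I invertible, and Y_γ := C A_γ^{-1} B. Define X = 2γ A_γ^{-T} C^T (I_l + Y_γ Y_γ^T)^{-1} C A_γ^{-1}. Then for the CARE residual C(X) = C^T C + A^T X + X A − X B B^T X one has C(X) = C̃^T C̃ with C̃ = C + 2γ (I + Y_γ Y_γ^T)^{-1} C A_γ^{-1}. -/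
set_option maxHeartbeats 1000000

open Matrix

/-- r = 1 case of Theorem 2.2: with A_γ = A − γI invertible,
Y = C A_γ⁻¹ B and X = 2γ A_γ⁻ᵀ Cᵀ (I + Y Yᵀ)⁻¹ C A_γ⁻¹, the CARE residual
CᵀC + AᵀX + XA − XBBᵀX factors as C̃ᵀ C̃ with
C̃ = C + 2γ (I + Y Yᵀ)⁻¹ C A_γ⁻¹. -/
theorem stmt10 (n m l : ℕ) (A : Matrix (Fin n) (Fin n) ℝ)
    (B : Matrix (Fin n) (Fin m) ℝ) (C : Matrix (Fin l) (Fin n) ℝ)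
    (γ : ℝ) (hγ : 0 < γ)
    (hA : IsUnit (A - γ • (1 : Matrix (Fin n) (Fin n) ℝ))) :
    let Aγ := A - γ • (1 : Matrix (Fin n) (Fin n) ℝ)
    let Y := C * Aγ⁻¹ * B
    let X := (2 * γ) • (Aγ⁻¹ᵀ * Cᵀ * ((1 + Y * Yᵀ)⁻¹) * C * Aγ⁻¹)
    let Ct := C + (2 * γ) • (((1 + Y * Yᵀ)⁻¹) * C * Aγ⁻¹)
    Cᵀ * C + Aᵀ * X + X * A - X * B * Bᵀ * X = Ctᵀ * Ct := by
  intro Aγ Y X Ct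
  have hAγ : Aγ = A - γ • (1 : Matrix (Fin n) (Fin n) ℝ) := rfl
  have hY : Y = C * Aγ⁻¹ * B := rfl
  have hX0 : X = (2 * γ) • (Aγ⁻¹ᵀ * Cᵀ * ((1 + Y * Yᵀ)⁻¹) * C * Aγ⁻¹) := rfl
  have hCt0 : Ct = C + (2 * γ) • (((1 + Y * Yᵀ)⁻¹) * C * Aγ⁻¹) := rfl
  clear_value Aγ Y X Ct
  have hdet : IsUnit Aγ.det := by rw [hAγ]; exact (isUnit_iff_isUnit_det _).mp hA
  have hMA : Aγ⁻¹ * Aγ = 1 := nonsing_inv_mul _ hdet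
  have hSpd : (1 + Y * Yᵀ).PosDef := by
    have h1 : (Y * Yᵀ).PosSemidef := by
      have := posSemidef_self_mul_conjTranspose Y
      rwa [conjTranspose_eq_transpose_of_trivial] at this
    exact Matrix.PosDef.one.add_posSemidef h1
  have hSu : IsUnit (1 + Y * Yᵀ).det := (isUnit_iff_isUnit_det _).mp hSpd.isUnit
  obtain ⟨N, hNdef⟩ : ∃ N, N = (1 + Y * Yᵀ)⁻¹ := ⟨_, rfl⟩
  have hNS : N * (1 + Y * Yᵀ) = 1 := by rw [hNdef]; exact nonsing_inv_mul _ hSu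
  have hNT : Nᵀ = N := by
    rw [hNdef, transpose_nonsing_inv, transpose_add, transpose_one, transpose_mul,
      transpose_transpose]
  have hkey : N * (Y * Yᵀ) * N = N - N * N := by
    have h1 : N * (1 + Y * Yᵀ) * N = N := by rw [hNS, Matrix.one_mul]
    have h2 : N * (1 + Y * Yᵀ) * N = N * N + N * (Y * Yᵀ) * N := by
      rw [Matrix.mul_add, Matrix.mul_one, Matrix.add_mul]
    rw [h1] at h2
    rw [eq_sub_iff_add_eq, add_comm]
    exact h2.symm
  obtain ⟨P, hPdef⟩ : ∃ P, P = C * Aγ⁻¹ := ⟨_, rfl⟩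
  have hPA : P * Aγ = C := by rw [hPdef, Matrix.mul_assoc, hMA, Matrix.mul_one]
  have hAP : Aγᵀ * Pᵀ = Cᵀ := by rw [← transpose_mul, hPA]
  obtain ⟨g, hgdef⟩ : ∃ g : ℝ, g = 2 * γ := ⟨_, rfl⟩
  have hX' : X = g • (Pᵀ * (N * P)) := by
    rw [hX0, hgdef, hPdef, ← hNdef, transpose_mul]
    simp only [Matrix.mul_assoc]
  have hAt : Aᵀ = Aγᵀ + γ • (1 : Matrix (Fin n) (Fin n) ℝ) := by
    have : A = Aγ + γ • (1 : Matrix (Fin n) (Fin n) ℝ) := by rw [hAγ]; abel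
    rw [this, transpose_add, transpose_smul, transpose_one]
  have hA' : A = Aγ + γ • (1 : Matrix (Fin n) (Fin n) ℝ) := by rw [hAγ]; abel
  have hAX : Aᵀ * X = g • (Cᵀ * (N * P)) + (g * γ) • (Pᵀ * (N * P)) := by
    rw [hX', hAt]
    rw [Matrix.add_mul, Matrix.mul_smul, Matrix.mul_smul, ← Matrix.mul_assoc, hAP,
      Matrix.smul_mul, Matrix.one_mul, smul_smul]
  have hXA : X * A = g • (Pᵀ * (N * C)) + (g * γ) • (Pᵀ * (N * P)) := by
    rw [hX', hA', Matrix.mul_add, Matrix.smul_mul, Matrix.smul_mul, Matrix.mul_smul,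
      Matrix.mul_one, smul_smul]
    congr 2
    rw [Matrix.mul_assoc, Matrix.mul_assoc, hPA]
  have hXB : X * B * Bᵀ * X = (g * g) • (Pᵀ * ((N * (Y * Yᵀ) * N) * P)) := by
    rw [hX']
    have hY' : Y = P * B := by rw [hY, hPdef]
    simp only [Matrix.smul_mul, Matrix.mul_smul, smul_smul, hY', transpose_mul]
    congr 1
    simp only [Matrix.mul_assoc]
  rw [hAX, hXA, hXB, hkey]
  have hCt : Ctᵀ * Ct = Cᵀ * C + g • (Cᵀ * (N * P)) + g • (Pᵀ * (N * C))
      + (g * g) • (Pᵀ * (N * (N * P))) := by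
    have hCt' : Ct = C + g • (N * P) := by
      rw [hCt0, hgdef, hPdef, ← hNdef, Matrix.mul_assoc]
    rw [hCt', transpose_add, transpose_smul, transpose_mul, hNT]
    simp only [Matrix.add_mul, Matrix.mul_add, Matrix.smul_mul, Matrix.mul_smul, smul_smul,
      smul_add]
    have h1 : Pᵀ * N * C = Pᵀ * (N * C) := by rw [Matrix.mul_assoc]
    have h2 : Pᵀ * N * (N * P) = Pᵀ * (N * (N * P)) := by rw [Matrix.mul_assoc]
    rw [h1, h2]
    abel
  rw [hCt]
  have hsub : Pᵀ * ((N - N * N) * P) = Pᵀ * (N * P) - Pᵀ * (N * (N * P)) := by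
    rw [Matrix.sub_mul, Matrix.mul_sub, Matrix.mul_assoc]
  rw [hsub]
  subst hgdef
  module
end

section
/- Let A ∈ ℝ^{n×n}, B ∈ ℝ^{n×m}, C ∈ ℝ^{l×n}, Â ∈ ℝ^{(r-1)n×n}, B̂ ∈ ℝ^{(r-1)n×m}, and γ > 0 with A_γ := A − γI invertible. Set Y = C A_γ^{-1} B, Ŷ = √(2γ)(C A_γ^{-1} ⊗ I_{r-1}) B̂, and X = 2γ A_γ^{-T} C^T (I + Y Y^T)^{-1} C A_γ^{-1}. Let M̃ satisfy M̃ M̃^T = I + (Y Y^T) ⊗ I_{r-1} + Ŷ Ŷ^T. Define the SCARE residual C(X) = C^T C + A^T X + X A + Â^T (X ⊗ I_{r-1}) Â − (X B + Â^T (X ⊗ I_{r-1}) B̂)(I + B̂^T (X ⊗ I_{r-1}) B̂)^{-1}(X B + Â^T (X ⊗ I_{r-1}) B̂)^T. Then C(X) = C̃^T C̃, where C̃ is the (rl)×n matrix obtained by stacking C + 2γ(I + Y Y^T)^{-1} C A_γ^{-1} on top of M̃^{-1}(√(2γ)(C A_γ^{-1} ⊗ I_{r-1}) Â − Ŷ B^T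 X). In particular C(X) ⪰ 0. -/
open Matrix Kronecker

namespace Stmt11Aux

lemma shift_id {n m : Type*} [Fintype n] [Fintype m] [DecidableEq m]
    (z a : Matrix n m ℝ) (Q Ni : Matrix m m ℝ)
    (hQ : Qᵀ = Q) (hN : (1 + Q) * Ni = 1) (hN' : Ni * (1 + Q) = 1) :
    (z + a) * Ni * (z + a)ᵀ
      = z * zᵀ + z * aᵀ + a * zᵀ - z * Q * zᵀ
        + (a - z * Q) * Ni * (a - z * Q)ᵀ := by
  have h1 : z + a = z * (1 + Q) + (a - z * Q) := by
    rw [Matrix.mul_add, Matrix.mul_one]; abel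
  have h1t : (z + a)ᵀ = (1 + Q) * zᵀ + (a - z * Q)ᵀ := by
    conv_lhs => rw [h1]
    rw [Matrix.transpose_add, Matrix.transpose_mul, Matrix.transpose_add,
      Matrix.transpose_one, hQ]
  have hzN : z * (1 + Q) * Ni = z := by rw [Matrix.mul_assoc, hN, Matrix.mul_one]
  have hwN : (a - z * Q) * Ni * ((1 + Q) * zᵀ) = (a - z * Q) * zᵀ := by
    rw [Matrix.mul_assoc, ← Matrix.mul_assoc Ni, hN', Matrix.one_mul]
  have expand : ∀ (X₁ X₂ : Matrix n m ℝ) (Y₁ Y₂ : Matrix m n ℝ),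
      (X₁ + X₂) * Ni * (Y₁ + Y₂)
        = X₁ * Ni * Y₁ + X₁ * Ni * Y₂ + (X₂ * Ni * Y₁ + X₂ * Ni * Y₂) := by
    intro X₁ X₂ Y₁ Y₂
    rw [Matrix.add_mul, Matrix.add_mul, Matrix.mul_add, Matrix.mul_add]
  calc (z + a) * Ni * (z + a)ᵀ
      = (z * (1 + Q) + (a - z * Q)) * Ni * ((1 + Q) * zᵀ + (a - z * Q)ᵀ) := by
        rw [← h1, ← h1t]
    _ = z * (1 + Q) * Ni * ((1 + Q) * zᵀ) + z * (1 + Q) * Ni * (a - z * Q)ᵀ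
        + ((a - z * Q) * Ni * ((1 + Q) * zᵀ) + (a - z * Q) * Ni * (a - z * Q)ᵀ) :=
        expand _ _ _ _
    _ = z * ((1 + Q) * zᵀ) + z * (a - z * Q)ᵀ
        + ((a - z * Q) * zᵀ + (a - z * Q) * Ni * (a - z * Q)ᵀ) := by
        rw [hzN, hwN]
    _ = z * zᵀ + z * aᵀ + a * zᵀ - z * Q * zᵀ + (a - z * Q) * Ni * (a - z * Q)ᵀ := by
        simp only [Matrix.transpose_sub, Matrix.transpose_mul, hQ, Matrix.mul_add,
          Matrix.add_mul, Matrix.mul_sub, Matrix.sub_mul, Matrix.mul_assoc,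
          Matrix.mul_one, Matrix.one_mul]
        abel

lemma core {n m q : Type*} [Fintype n] [Fintype m] [Fintype q] [DecidableEq m]
    (z : Matrix n m ℝ) (u : Matrix q n ℝ) (v : Matrix q m ℝ)
    (T : Matrix q q ℝ) (Ni : Matrix m m ℝ)
    (hT : Tᵀ = T)
    (hN : (1 + vᵀ * T * v) * Ni = 1) (hN' : Ni * (1 + vᵀ * T * v) = 1) :
    z * zᵀ + uᵀ * T * u - (z + uᵀ * T * v) * Ni * (z + uᵀ * T * v)ᵀ
      = (u - v * zᵀ)ᵀ * (T - T * v * Ni * vᵀ * T) * (u - v * zᵀ) := by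
  have hQ : (vᵀ * T * v)ᵀ = vᵀ * T * v := by
    rw [Matrix.transpose_mul, Matrix.transpose_mul, Matrix.transpose_transpose, hT,
      Matrix.mul_assoc]
  rw [shift_id z (uᵀ * T * v) (vᵀ * T * v) Ni hQ hN hN']
  simp only [Matrix.transpose_sub, Matrix.transpose_add, Matrix.transpose_mul,
    Matrix.transpose_transpose, hT, Matrix.mul_add, Matrix.add_mul, Matrix.mul_sub,
    Matrix.sub_mul, Matrix.mul_assoc]
  abel

lemma woodbury {m q : Type*} [Fintype m] [Fintype q] [DecidableEq m] [DecidableEq q]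
    (v : Matrix q m ℝ) (T Ti : Matrix q q ℝ) (Ni : Matrix m m ℝ)
    (hTi : Ti * T = 1)
    (hN : (1 + vᵀ * T * v) * Ni = 1) :
    (Ti + v * vᵀ) * (T - T * v * Ni * vᵀ * T) = 1 := by
  have e2 : v * (((1 + vᵀ * T * v) * Ni) * (vᵀ * T)) = v * (vᵀ * T) := by
    rw [hN, Matrix.one_mul]
  have e2' : v * (Ni * (vᵀ * T)) + v * (vᵀ * (T * (v * (Ni * (vᵀ * T)))))
      = v * (vᵀ * T) := by
    rw [← e2]
    simp only [Matrix.add_mul, Matrix.mul_add, Matrix.one_mul, Matrix.mul_assoc]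
  have e1 : Ti * (T * (v * (Ni * (vᵀ * T)))) = v * (Ni * (vᵀ * T)) := by
    rw [← Matrix.mul_assoc Ti T, hTi, Matrix.one_mul]
  calc (Ti + v * vᵀ) * (T - T * v * Ni * vᵀ * T)
      = Ti * T - Ti * (T * (v * (Ni * (vᵀ * T)))) +
        (v * (vᵀ * T) - v * (vᵀ * (T * (v * (Ni * (vᵀ * T)))))) := by
        simp only [Matrix.mul_sub, Matrix.add_mul, Matrix.mul_assoc]
        abel
    _ = 1 := by
        rw [hTi, e1, ← e2']
        abel

lemma kron_one_psd {l p : Type*} [Fintype l] [DecidableEq l] [Fintype p] [DecidableEq p]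
    {P : Matrix l l ℝ} (hP : P.PosSemidef) :
    (P ⊗ₖ (1 : Matrix p p ℝ)).PosSemidef := by
  exact hP.kronecker Matrix.PosSemidef.one

end Stmt11Aux

open Stmt11Aux

/-- Theorem 2.2: low-rank factorization of the SCARE residual. -/
theorem stmt11 (n m l r : ℕ)
    (A : Matrix (Fin n) (Fin n) ℝ) (B : Matrix (Fin n) (Fin m) ℝ)
    (C : Matrix (Fin l) (Fin n) ℝ)
    (Ah : Matrix (Fin n × Fin (r - 1)) (Fin n) ℝ)
    (Bh : Matrix (Fin n × Fin (r - 1)) (Fin m) ℝ)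
    (γ : ℝ) (hγ : 0 < γ)
    (hA : IsUnit (A - γ • (1 : Matrix (Fin n) (Fin n) ℝ)))
    (Mt : Matrix (Fin l × Fin (r - 1)) (Fin l × Fin (r - 1)) ℝ)
    (hMt : Mt * Mtᵀ =
      (1 : Matrix (Fin l × Fin (r - 1)) (Fin l × Fin (r - 1)) ℝ)
        + ((C * (A - γ • (1 : Matrix (Fin n) (Fin n) ℝ))⁻¹ * B) *
            (C * (A - γ • (1 : Matrix (Fin n) (Fin n) ℝ))⁻¹ * B)ᵀ) ⊗ₖ
            (1 : Matrix (Fin (r - 1)) (Fin (r - 1)) ℝ)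
        + (Real.sqrt (2 * γ) •
            (((C * (A - γ • (1 : Matrix (Fin n) (Fin n) ℝ))⁻¹) ⊗ₖ
              (1 : Matrix (Fin (r - 1)) (Fin (r - 1)) ℝ)) * Bh)) *
          (Real.sqrt (2 * γ) •
            (((C * (A - γ • (1 : Matrix (Fin n) (Fin n) ℝ))⁻¹) ⊗ₖ
              (1 : Matrix (Fin (r - 1)) (Fin (r - 1)) ℝ)) * Bh))ᵀ) :
    let Aγ := A - γ • (1 : Matrix (Fin n) (Fin n) ℝ)
    let CA := C * Aγ⁻¹
    let Y := CA * B
    let Yh := Real.sqrt (2 * γ) •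
      ((CA ⊗ₖ (1 : Matrix (Fin (r - 1)) (Fin (r - 1)) ℝ)) * Bh)
    let X := (2 * γ) • (Aγ⁻¹ᵀ * Cᵀ * ((1 + Y * Yᵀ)⁻¹) * C * Aγ⁻¹)
    let resid := Cᵀ * C + Aᵀ * X + X * A
      + Ahᵀ * (X ⊗ₖ (1 : Matrix (Fin (r - 1)) (Fin (r - 1)) ℝ)) * Ah
      - (X * B + Ahᵀ * (X ⊗ₖ (1 : Matrix (Fin (r - 1)) (Fin (r - 1)) ℝ)) * Bh) *
        ((1 : Matrix (Fin m) (Fin m) ℝ)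
          + Bhᵀ * (X ⊗ₖ (1 : Matrix (Fin (r - 1)) (Fin (r - 1)) ℝ)) * Bh)⁻¹ *
        (X * B + Ahᵀ * (X ⊗ₖ (1 : Matrix (Fin (r - 1)) (Fin (r - 1)) ℝ)) * Bh)ᵀ
    let Ct := Matrix.fromRows
      (C + (2 * γ) • (((1 + Y * Yᵀ)⁻¹) * C * Aγ⁻¹))
      (Mt⁻¹ * (Real.sqrt (2 * γ) •
          ((CA ⊗ₖ (1 : Matrix (Fin (r - 1)) (Fin (r - 1)) ℝ)) * Ah)
        - Yh * Bᵀ * X))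
    resid = Ctᵀ * Ct ∧ resid.PosSemidef := by
  intro Aγ CA Y Yh X resid Ct
  have hAγv : Aγ = A - γ • (1 : Matrix (Fin n) (Fin n) ℝ) := rfl
  have hCAv : CA = C * Aγ⁻¹ := rfl
  have hYv : Y = CA * B := rfl
  have hYhv : Yh = Real.sqrt (2 * γ) •
      ((CA ⊗ₖ (1 : Matrix (Fin (r - 1)) (Fin (r - 1)) ℝ)) * Bh) := rfl
  have hXv : X = (2 * γ) • (Aγ⁻¹ᵀ * Cᵀ * ((1 + Y * Yᵀ)⁻¹) * C * Aγ⁻¹) := rfl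
  have hresidv : resid = Cᵀ * C + Aᵀ * X + X * A
      + Ahᵀ * (X ⊗ₖ (1 : Matrix (Fin (r - 1)) (Fin (r - 1)) ℝ)) * Ah
      - (X * B + Ahᵀ * (X ⊗ₖ (1 : Matrix (Fin (r - 1)) (Fin (r - 1)) ℝ)) * Bh) *
        ((1 : Matrix (Fin m) (Fin m) ℝ)
          + Bhᵀ * (X ⊗ₖ (1 : Matrix (Fin (r - 1)) (Fin (r - 1)) ℝ)) * Bh)⁻¹ *
        (X * B + Ahᵀ * (X ⊗ₖ (1 : Matrix (Fin (r - 1)) (Fin (r - 1)) ℝ)) * Bh)ᵀ := rfl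
  have hCtv : Ct = Matrix.fromRows
      (C + (2 * γ) • (((1 + Y * Yᵀ)⁻¹) * C * Aγ⁻¹))
      (Mt⁻¹ * (Real.sqrt (2 * γ) •
          ((CA ⊗ₖ (1 : Matrix (Fin (r - 1)) (Fin (r - 1)) ℝ)) * Ah)
        - Yh * Bᵀ * X)) := rfl
  clear_value Aγ CA Y Yh X resid Ct
  have hMt' : Mt * Mtᵀ = 1 + (Y * Yᵀ) ⊗ₖ (1 : Matrix (Fin (r - 1)) (Fin (r - 1)) ℝ)
      + (Real.sqrt (2 * γ) • ((CA ⊗ₖ (1 : Matrix (Fin (r - 1)) (Fin (r - 1)) ℝ)) * Bh)) *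
        (Real.sqrt (2 * γ) • ((CA ⊗ₖ (1 : Matrix (Fin (r - 1)) (Fin (r - 1)) ℝ)) * Bh))ᵀ := by
    rw [hMt, hYv, hCAv, hAγv]
  clear hMt
  set c : ℝ := Real.sqrt (2 * γ) with hc
  have hcc : c * c = 2 * γ := Real.mul_self_sqrt (by positivity)
  have h2γ : (2 * γ) ≠ 0 := by positivity
  -- invertibility of Aγ
  have hAd : IsUnit Aγ.det := (Matrix.isUnit_iff_isUnit_det Aγ).mp (hAγv ▸ hA)
  have hA1 : Aγ⁻¹ * Aγ = 1 := Matrix.nonsing_inv_mul Aγ hAd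
  -- S = 1 + Y Yᵀ
  have hYps : (Y * Yᵀ).PosSemidef := by
    simpa [Matrix.conjTranspose_eq_transpose_of_trivial] using
      Matrix.posSemidef_self_mul_conjTranspose Y
  have hS : (1 + Y * Yᵀ).PosDef := Matrix.PosDef.add_posSemidef Matrix.PosDef.one hYps
  have hSd : IsUnit (1 + Y * Yᵀ).det := (Matrix.isUnit_iff_isUnit_det _).mp hS.isUnit
  obtain ⟨Si, hSi_def⟩ : ∃ Si, Si = (1 + Y * Yᵀ)⁻¹ := ⟨_, rfl⟩
  have hS2 : (1 + Y * Yᵀ) * Si = 1 := by rw [hSi_def]; exact Matrix.mul_nonsing_inv _ hSd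
  have hSt : (1 + Y * Yᵀ)ᵀ = 1 + Y * Yᵀ := by
    rw [Matrix.transpose_add, Matrix.transpose_one, Matrix.transpose_mul,
      Matrix.transpose_transpose]
  have hSit : Siᵀ = Si := by
    rw [hSi_def, Matrix.transpose_nonsing_inv, hSt]
  have hSips : Si.PosSemidef := by rw [hSi_def]; exact hS.inv.posSemidef
  -- basic rewrites
  have hXe : X = (2 * γ) • (CAᵀ * Si * CA) := by
    rw [hXv, hCAv, ← hSi_def, Matrix.transpose_mul]
    simp only [Matrix.mul_assoc]
  have hXt : Xᵀ = X := by
    rw [hXe, Matrix.transpose_smul]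
    simp only [Matrix.transpose_mul, Matrix.transpose_transpose, hSit, Matrix.mul_assoc]
  obtain ⟨K, hK⟩ : ∃ K, K = CA ⊗ₖ (1 : Matrix (Fin (r - 1)) (Fin (r - 1)) ℝ) := ⟨_, rfl⟩
  have hKt : Kᵀ = CAᵀ ⊗ₖ (1 : Matrix (Fin (r - 1)) (Fin (r - 1)) ℝ) := by
    rw [hK, ← Matrix.kroneckerMap_transpose, Matrix.transpose_one]
  obtain ⟨Tm, hTm⟩ : ∃ Tm, Tm = (2 * γ) •
      (Si ⊗ₖ (1 : Matrix (Fin (r - 1)) (Fin (r - 1)) ℝ)) := ⟨_, rfl⟩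
  obtain ⟨u, hu⟩ : ∃ u, u = K * Ah := ⟨_, rfl⟩
  obtain ⟨v, hv⟩ : ∃ v, v = K * Bh := ⟨_, rfl⟩
  obtain ⟨z, hz⟩ : ∃ z, z = X * B := ⟨_, rfl⟩
  have hTmT : Tmᵀ = Tm := by
    rw [hTm, Matrix.transpose_smul, ← Matrix.kroneckerMap_transpose, hSit,
      Matrix.transpose_one]
  have f1 : X ⊗ₖ (1 : Matrix (Fin (r - 1)) (Fin (r - 1)) ℝ) = Kᵀ * Tm * K := by
    rw [hKt, hTm, hK, Matrix.mul_smul, Matrix.smul_mul,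
      ← Matrix.mul_kronecker_mul, ← Matrix.mul_kronecker_mul,
      Matrix.one_mul, Matrix.one_mul, hXe, Matrix.smul_kronecker]
  -- products through the kronecker factorization
  have huTu : Ahᵀ * (X ⊗ₖ (1 : Matrix (Fin (r - 1)) (Fin (r - 1)) ℝ)) * Ah
      = uᵀ * Tm * u := by
    rw [f1, hu]
    simp only [Matrix.transpose_mul, Matrix.mul_assoc]
  have huTv : Ahᵀ * (X ⊗ₖ (1 : Matrix (Fin (r - 1)) (Fin (r - 1)) ℝ)) * Bh
      = uᵀ * Tm * v := by
    rw [f1, hu, hv]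
    simp only [Matrix.transpose_mul, Matrix.mul_assoc]
  have hvTv : Bhᵀ * (X ⊗ₖ (1 : Matrix (Fin (r - 1)) (Fin (r - 1)) ℝ)) * Bh
      = vᵀ * Tm * v := by
    rw [f1, hv]
    simp only [Matrix.transpose_mul, Matrix.mul_assoc]
  -- invertibility of N = 1 + vᵀ Tm v
  have hQps : (vᵀ * Tm * v).PosSemidef := by
    have h0 : vᵀ * Tm * v
        = (c • v)ᴴ * (Si ⊗ₖ (1 : Matrix (Fin (r - 1)) (Fin (r - 1)) ℝ)) * (c • v) := by
      rw [Matrix.conjTranspose_eq_transpose_of_trivial, Matrix.transpose_smul, hTm]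
      simp only [Matrix.smul_mul, Matrix.mul_smul, smul_smul, hcc]
    rw [h0]
    exact (kron_one_psd hSips).conjTranspose_mul_mul_same _
  have hNpd : ((1 : Matrix (Fin m) (Fin m) ℝ) + vᵀ * Tm * v).PosDef :=
    Matrix.PosDef.add_posSemidef Matrix.PosDef.one hQps
  have hNd : IsUnit ((1 : Matrix (Fin m) (Fin m) ℝ) + vᵀ * Tm * v).det :=
    (Matrix.isUnit_iff_isUnit_det _).mp hNpd.isUnit
  have hN1 : ((1 : Matrix (Fin m) (Fin m) ℝ) + vᵀ * Tm * v)
      * ((1 : Matrix (Fin m) (Fin m) ℝ) + vᵀ * Tm * v)⁻¹ = 1 :=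
    Matrix.mul_nonsing_inv _ hNd
  have hN2 : ((1 : Matrix (Fin m) (Fin m) ℝ) + vᵀ * Tm * v)⁻¹
      * ((1 : Matrix (Fin m) (Fin m) ℝ) + vᵀ * Tm * v) = 1 :=
    Matrix.nonsing_inv_mul _ hNd
  have hcore := core z u v Tm ((1 + vᵀ * Tm * v)⁻¹) hTmT hN1 hN2
  -- the Woodbury-type inverse of Mt Mtᵀ
  obtain ⟨Ti, hTi⟩ : ∃ Ti, Ti = (2 * γ)⁻¹ •
      ((1 + Y * Yᵀ) ⊗ₖ (1 : Matrix (Fin (r - 1)) (Fin (r - 1)) ℝ)) := ⟨_, rfl⟩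
  have hTiT : Ti * Tm = 1 := by
    rw [hTi, hTm, Matrix.smul_mul, Matrix.mul_smul, smul_smul,
      ← Matrix.mul_kronecker_mul, hS2, Matrix.one_mul, Matrix.one_kronecker_one,
      inv_mul_cancel₀ h2γ, one_smul]
  have hG : Mt * Mtᵀ = (2 * γ) • (Ti + v * vᵀ) := by
    rw [hMt', ← hK, ← hv, hTi]
    rw [smul_add, smul_smul, mul_inv_cancel₀ h2γ, one_smul, Matrix.add_kronecker,
      Matrix.one_kronecker_one]
    rw [Matrix.transpose_smul, Matrix.smul_mul, Matrix.mul_smul, smul_smul, hcc]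
  have hwood : (Ti + v * vᵀ)
      * (Tm - Tm * v * ((1 + vᵀ * Tm * v)⁻¹) * vᵀ * Tm) = 1 :=
    woodbury v Tm Ti _ hTiT hN1
  have hGright : (Mt * Mtᵀ)
      * ((2 * γ)⁻¹ • (Tm - Tm * v * ((1 + vᵀ * Tm * v)⁻¹) * vᵀ * Tm)) = 1 := by
    rw [hG, Matrix.smul_mul, Matrix.mul_smul, smul_smul, mul_inv_cancel₀ h2γ, one_smul,
      hwood]
  have hGinv : (Mt * Mtᵀ)⁻¹
      = (2 * γ)⁻¹ • (Tm - Tm * v * ((1 + vᵀ * Tm * v)⁻¹) * vᵀ * Tm) :=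
    Matrix.inv_eq_right_inv hGright
  -- Mt is invertible
  have hGpd : (Mt * Mtᵀ).PosDef := by
    rw [hMt']
    refine Matrix.PosDef.add_posSemidef
      (Matrix.PosDef.add_posSemidef Matrix.PosDef.one (kron_one_psd hYps)) ?_
    simpa [Matrix.conjTranspose_eq_transpose_of_trivial] using
      Matrix.posSemidef_self_mul_conjTranspose
        (c • ((CA ⊗ₖ (1 : Matrix (Fin (r - 1)) (Fin (r - 1)) ℝ)) * Bh))
  have hMtd : IsUnit Mt.det := by
    have h1 := hGpd.det_pos
    rw [Matrix.det_mul, Matrix.det_transpose] at h1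
    refine isUnit_iff_ne_zero.mpr fun h => ?_
    rw [h, mul_zero] at h1
    exact lt_irrefl _ h1
  have hMM : Mt⁻¹ᵀ * Mt⁻¹
      = (2 * γ)⁻¹ • (Tm - Tm * v * ((1 + vᵀ * Tm * v)⁻¹) * vᵀ * Tm) := by
    rw [Matrix.transpose_nonsing_inv, ← Matrix.mul_inv_rev, hGinv]
  -- the second block of Ct
  have hzT : zᵀ = Bᵀ * X := by rw [hz, Matrix.transpose_mul, hXt]
  have hWz : Yh * Bᵀ * X = c • (v * zᵀ) := by
    rw [hYhv, ← hK, ← hv, Matrix.smul_mul, Matrix.smul_mul, Matrix.mul_assoc, ← hzT]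
  have hW : c • (K * Ah) - Yh * Bᵀ * X = c • (u - v * zᵀ) := by
    rw [hWz, hu, smul_sub]
  have hblock2 : (Mt⁻¹ * (c • (u - v * zᵀ)))ᵀ * (Mt⁻¹ * (c • (u - v * zᵀ)))
      = (u - v * zᵀ)ᵀ * (Tm - Tm * v * ((1 + vᵀ * Tm * v)⁻¹) * vᵀ * Tm)
        * (u - v * zᵀ) := by
    calc (Mt⁻¹ * (c • (u - v * zᵀ)))ᵀ * (Mt⁻¹ * (c • (u - v * zᵀ)))
        = (c * c) • ((u - v * zᵀ)ᵀ * ((Mt⁻¹ᵀ * Mt⁻¹) * (u - v * zᵀ))) := by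
          simp only [Matrix.transpose_mul, Matrix.transpose_smul, Matrix.smul_mul,
            Matrix.mul_smul, smul_smul, Matrix.mul_assoc]
      _ = (u - v * zᵀ)ᵀ * (Tm - Tm * v * ((1 + vᵀ * Tm * v)⁻¹) * vᵀ * Tm)
          * (u - v * zᵀ) := by
          rw [hMM, hcc, Matrix.smul_mul, Matrix.mul_smul, smul_smul,
            mul_inv_cancel₀ h2γ, one_smul]
          simp only [Matrix.mul_assoc]
  -- block 1
  have hCAAγ : CA * Aγ = C := by rw [hCAv, Matrix.mul_assoc, hA1, Matrix.mul_one]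
  have hAγCAt : Aγᵀ * CAᵀ = Cᵀ := by rw [← Matrix.transpose_mul, hCAAγ]
  have hAγX : Aγᵀ * X = (2 * γ) • (Cᵀ * Si * CA) := by
    rw [hXe, Matrix.mul_smul]
    congr 1
    rw [← Matrix.mul_assoc, ← Matrix.mul_assoc, hAγCAt]
  have hXAγ : X * Aγ = (2 * γ) • (CAᵀ * Si * C) := by
    rw [hXe, Matrix.smul_mul]
    congr 1
    rw [Matrix.mul_assoc (CAᵀ * Si), hCAAγ]
  have hAe : A = Aγ + γ • (1 : Matrix (Fin n) (Fin n) ℝ) := by rw [hAγv]; abel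
  have hAtr : Aᵀ = Aγᵀ + γ • (1 : Matrix (Fin n) (Fin n) ℝ) := by
    rw [hAe, Matrix.transpose_add, Matrix.transpose_smul, Matrix.transpose_one]
  have hkey : Si = Si * Si + Si * ((Y * Yᵀ) * Si) := by
    conv_lhs => rw [show Si = Si * ((1 + Y * Yᵀ) * Si) from by
      rw [hS2, Matrix.mul_one]]
    rw [Matrix.add_mul, Matrix.one_mul, Matrix.mul_add]
  have hXsplit : (2 * γ) • X = ((2 * γ) * (2 * γ)) • (CAᵀ * (Si * Si) * CA)
      + ((2 * γ) * (2 * γ)) • (CAᵀ * (Si * ((Y * Yᵀ) * Si)) * CA) := by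
    rw [hXe, smul_smul]
    conv_lhs => rw [hkey]
    simp only [Matrix.mul_add, Matrix.add_mul, smul_add, Matrix.mul_assoc]
  have hblock1 : Cᵀ * C + Aᵀ * X + X * A
      = (C + (2 * γ) • (Si * C * Aγ⁻¹))ᵀ * (C + (2 * γ) • (Si * C * Aγ⁻¹))
        + z * zᵀ := by
    calc Cᵀ * C + Aᵀ * X + X * A
        = Cᵀ * C + (2 * γ) • (Cᵀ * Si * CA) + (2 * γ) • (CAᵀ * Si * C)
          + (2 * γ) • X := by
          rw [hAtr, hAe]
          simp only [Matrix.add_mul, Matrix.mul_add, Matrix.smul_mul, Matrix.mul_smul,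
            Matrix.one_mul, Matrix.mul_one, hAγX, hXAγ]
          module
      _ = Cᵀ * C + (2 * γ) • (Cᵀ * Si * CA) + (2 * γ) • (CAᵀ * Si * C)
          + (((2 * γ) * (2 * γ)) • (CAᵀ * (Si * Si) * CA)
            + ((2 * γ) * (2 * γ)) • (CAᵀ * (Si * ((Y * Yᵀ) * Si)) * CA)) := by
          rw [hXsplit]
      _ = (C + (2 * γ) • (Si * C * Aγ⁻¹))ᵀ * (C + (2 * γ) • (Si * C * Aγ⁻¹))
          + z * zᵀ := by
          simp only [hz, hXe, hYv, hCAv, Matrix.transpose_add, Matrix.transpose_smul,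
            Matrix.transpose_mul, Matrix.transpose_transpose, hSit, Matrix.add_mul,
            Matrix.mul_add, Matrix.smul_mul, Matrix.mul_smul, smul_smul, smul_add,
            Matrix.mul_assoc]
          module
  -- assemble
  have hmain : resid = Ctᵀ * Ct := by
    rw [hresidv, hCtv, Matrix.transpose_fromRows, Matrix.fromCols_mul_fromRows]
    rw [← hSi_def, ← hK, hW, hblock2]
    rw [huTu, huTv, hvTv, ← hz]
    rw [← hcore]
    rw [hblock1]
    abel
  refine ⟨hmain, ?_⟩
  have hp : (Ctᵀ * Ct).PosSemidef := by
    simpa [Matrix.conjTranspose_eq_transpose_of_trivial] using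
      Matrix.posSemidef_conjTranspose_mul_self Ct
  rw [hmain]
  exact hp
end

section
/- Let A ∈ ℝ^{n×n}, B ∈ ℝ^{n×m}, Â ∈ ℝ^{(r-1)n×n}, B̂ ∈ ℝ^{(r-1)n×m}, X symmetric n×n with R_X := I + B̂^T(X⊗I_{r-1})B̂ ≻ 0 and P_X^T P_X = R_X. Define B_X = B P_X^{-1}, B̂_X = B̂ P_X^{-1}, L_X^T = B_X^T X + B̂_X^T (X⊗I_{r-1}) Â, A_X = A − B_X L_X^T, Â_X = Â − B̂_X L_X^T. For any F_⋆ ∈ ℝ^{m×n}, setting F_X = L_X^T + P_X F_⋆, one has A_X + B_X F_X = A + B F_⋆ and Â_X + B̂_X F_X = Â + B̂ F_⋆. -/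
open Matrix Kronecker

/-- with R_X = I + B̂ᵀ(X ⊗ I_{r-1})B̂ ≻ 0, P_Xᵀ P_X = R_X,
B_X = B P_X⁻¹, B̂_X = B̂ P_X⁻¹, L_Xᵀ = B_Xᵀ X + B̂_Xᵀ (X ⊗ I_{r-1}) Â,
A_X = A − B_X L_Xᵀ, Â_X = Â − B̂_X L_Xᵀ, and F_X = L_Xᵀ + P_X F_⋆, the
closed-loop matrices satisfy A_X + B_X F_X = A + B F_⋆ and
Â_X + B̂_X F_X = Â + B̂ F_⋆. -/
theorem stmt16 (n m r : ℕ)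
    (A : Matrix (Fin n) (Fin n) ℝ) (B : Matrix (Fin n) (Fin m) ℝ)
    (Ah : Matrix (Fin n × Fin (r - 1)) (Fin n) ℝ)
    (Bh : Matrix (Fin n × Fin (r - 1)) (Fin m) ℝ)
    (X : Matrix (Fin n) (Fin n) ℝ) (hX : Xᵀ = X)
    (P : Matrix (Fin m) (Fin m) ℝ)
    (hR : ((1 : Matrix (Fin m) (Fin m) ℝ) +
      Bhᵀ * (X ⊗ₖ (1 : Matrix (Fin (r - 1)) (Fin (r - 1)) ℝ)) * Bh).PosDef)
    (hP : Pᵀ * P = (1 : Matrix (Fin m) (Fin m) ℝ) +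
      Bhᵀ * (X ⊗ₖ (1 : Matrix (Fin (r - 1)) (Fin (r - 1)) ℝ)) * Bh)
    (F : Matrix (Fin m) (Fin n) ℝ) :
    let BX := B * P⁻¹
    let BhX := Bh * P⁻¹
    let LT := BXᵀ * X + BhXᵀ * (X ⊗ₖ (1 : Matrix (Fin (r - 1)) (Fin (r - 1)) ℝ)) * Ah
    let AX := A - BX * LT
    let AhX := Ah - BhX * LT
    let FX := LT + P * F
    AX + BX * FX = A + B * F ∧ AhX + BhX * FX = Ah + Bh * F := by
  intro BX BhX LT AX AhX FX
  have hdet : IsUnit P.det := by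
    have h1 : (0:ℝ) < (Pᵀ * P).det := by rw [hP]; exact hR.det_pos
    rw [Matrix.det_mul, Matrix.det_transpose] at h1
    exact isUnit_iff_ne_zero.mpr (by nlinarith)
  have hinv : P⁻¹ * P = 1 := Matrix.nonsing_inv_mul P hdet
  constructor
  · show A - BX * LT + BX * (LT + P * F) = A + B * F
    show A - BX * LT + BX * (LT + P * F) = A + B * F
    have : BX * (P * F) = B * F := by
      show B * P⁻¹ * (P * F) = B * F
      rw [Matrix.mul_assoc B, ← Matrix.mul_assoc P⁻¹, hinv, Matrix.one_mul]
    rw [Matrix.mul_add BX LT (P * F), this]; abel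
  · show Ah - BhX * LT + BhX * (LT + P * F) = Ah + Bh * F
    have : BhX * (P * F) = Bh * F := by
      show Bh * P⁻¹ * (P * F) = Bh * F
      rw [Matrix.mul_assoc Bh, ← Matrix.mul_assoc P⁻¹, hinv, Matrix.one_mul]
    rw [Matrix.mul_add BhX LT (P * F), this]; abel
end
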